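/- Let H be a real Hilbert space, λ ∈ ℝ, and let f : H → (-∞,∞] be proper, λ-convex and lower semicontinuous. For x ∈ H with f(x) < ∞, define S(x) := sup_{y ≠ x} [f(x) − f(y) + (λ/2)‖x−y‖²]⁺ / ‖x−y‖. Then ∂f(x) is nonempty if and only if S(x) < ∞, and in that case |∇f|(x) = S(x). -/

import Mathlib

open Filter Topology MeasureTheory Set
open scoped ENNReal RealInnerProductSpace

noncomputable section

attribute [local instance] Classical.propDecidable

variable {H : Type*} [NormedAddCommGroup H] [InnerProductSpace ℝ H] [CompleteSpace H]

/-- `f : H → (-∞,∞]` is proper: not identically `⊤` (and it never takes the value `⊥`). -/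
def ProperFn (f : H → EReal) : Prop :=
  (∃ x, f x ≠ ⊤) ∧ ∀ x, f x ≠ ⊥

/-- `f` is `λ`-convex: `x ↦ f x - (λ/2)‖x‖²` is convex, expressed via the perturbed
convexity inequality. -/
def LambdaConvex (lam : ℝ) (f : H → EReal) : Prop :=
  ∀ x y : H, ∀ t : ℝ, 0 ≤ t → t ≤ 1 →
    f ((1 - t) • x + t • y)
      ≤ ((1 - t : ℝ) : EReal) * f x + ((t : ℝ) : EReal) * f y
        - ((lam / 2 * (t * (1 - t)) * ‖x - y‖ ^ 2 : ℝ) : EReal)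

/-- The subdifferential of a `λ`-convex function at `x` (contained in the domain of `f`). -/
def subdiff (lam : ℝ) (f : H → EReal) (x : H) : Set H :=
  {p : H | f x ≠ ⊤ ∧
    ∀ y : H, f x + ((⟪p, y - x⟫ + lam / 2 * ‖y - x‖ ^ 2 : ℝ) : EReal) ≤ f y}

/-- `∇f(x)`: the element of minimal norm of `∂f(x)` (junk value `0` if there is none). -/
def gradMin (lam : ℝ) (f : H → EReal) (x : H) : H :=
  if h : ∃ p ∈ subdiff lam f x, ∀ q ∈ subdiff lam f x, ‖p‖ ≤ ‖q‖ then h.choose else 0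

/-- `|∇f|(x) ∈ [0,∞]`, equal to `+∞` when `∂f(x) = ∅` (in particular when `f x = ⊤`). -/
def gradNorm (lam : ℝ) (f : H → EReal) (x : H) : ℝ≥0∞ :=
  if (subdiff lam f x).Nonempty then ENNReal.ofReal ‖gradMin lam f x‖ else ⊤

/-- The resolvent `J_τ(x)`: the minimizer of `y ↦ f y + ‖y-x‖²/(2τ)` (junk `0` if none). -/
def Jres (f : H → EReal) (τ : ℝ) (x : H) : H :=
  if h : ∃ y : H, ∀ z : H,
      f y + ((‖y - x‖ ^ 2 / (2 * τ) : ℝ) : EReal)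
        ≤ f z + ((‖z - x‖ ^ 2 / (2 * τ) : ℝ) : EReal)
  then h.choose else 0

/-- The Moreau–Yosida regularization `f_τ(x) = min_y (f y + ‖y-x‖²/(2τ))`. -/
def moreau (f : H → EReal) (τ : ℝ) (x : H) : ℝ :=
  (f (Jres f τ x)).toReal + ‖Jres f τ x - x‖ ^ 2 / (2 * τ)

/-- `γ` is absolutely continuous on `[a,b]` with an integrable derivative. -/
abbrev IsACCurve (a b : ℝ) (γ : ℝ → H) : Prop :=
  ∃ g : ℝ → H, IntegrableOn g (Icc a b) ∧ ∀ t ∈ Icc a b, γ t = γ a + ∫ s in a..t, g s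

/-- The action `I_f^{[a,b]}(γ) = ∫_a^b (‖γ̇‖² + |∇f|²(γ)) dt ∈ [0,∞]`, set to `+∞` when `γ`
is not absolutely continuous. -/
def actionFn (lam : ℝ) (f : H → EReal) (a b : ℝ) (γ : ℝ → H) : ℝ≥0∞ :=
  if h : IsACCurve a b γ then
    ∫⁻ t in Ioc a b, (ENNReal.ofReal (‖h.choose t‖ ^ 2) + gradNorm lam f (γ t) ^ 2)
  else ⊤

/-- `Θ_{f,x₀,x₁}`: the action on `[0,1]` with endpoint constraints. -/
def Theta (lam : ℝ) (f : H → EReal) (x0 x1 : H) (γ : ℝ → H) : ℝ≥0∞ :=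
  if γ 0 = x0 ∧ γ 1 = x1 then actionFn lam f 0 1 γ else ⊤

/-- `Γ_δ(x₀,x_δ)`: infimum of the action over curves joining the endpoints. -/
def GammaInf (lam : ℝ) (f : H → EReal) (δ : ℝ) (x0 xδ : H) : ℝ≥0∞ :=
  ⨅ (γ : ℝ → H) (_ : γ 0 = x0 ∧ γ δ = xδ), actionFn lam f 0 δ γ

/-- Mosco convergence of `fh` to `f`: recovery sequences for the strong topology, and the
`liminf` inequality along weakly convergent sequences. -/
def Mosco (fh : ℕ → H → EReal) (f : H → EReal) : Prop :=
  (∀ x : H, ∃ xh : ℕ → H, Tendsto xh atTop (𝓝 x) ∧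
      Filter.limsup (fun h => fh h (xh h)) atTop ≤ f x) ∧
  (∀ (xh : ℕ → H) (x : H),
      (∀ p : H, Tendsto (fun h => ⟪xh h, p⟫) atTop (𝓝 ⟪x, p⟫)) →
      f x ≤ Filter.liminf (fun h => fh h (xh h)) atTop)

/-!
A subgradient `p` at `x` makes `f` lie above the cone
`y ↦ f x + (λ/2)‖y - x‖² - ‖p‖ ‖y - x‖` (Cauchy–Schwarz), which is exactly `S(x) ≤ ‖p‖`.
Conversely, if `S(x) ≤ s`, the epigraph of `y ↦ f y - f x - (λ/2)‖y - x‖²`, convex by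
`λ`-convexity, misses the open convex set `{(y, t) | t < -s‖y - x‖}`. A Hahn–Banach hyperplane
separating them is non-vertical and passes through `(x, 0)`, so it is the graph of a functional of
norm at most `s`, whose Riesz representative is a subgradient at `x`. Thus `∂f(x) ≠ ∅` iff
`S(x) < ∞`, and the minimal-norm element of the closed convex set `∂f(x)` has norm `S(x)`.
-/

lemma EReal.coe_le_iff_of_ne_bot {a : ℝ} {e : EReal} (he : e ≠ ⊥) :
    (a : EReal) ≤ e ↔ (e ≠ ⊤ → a ≤ e.toReal) := by
  induction e using EReal.rec <;> simp_all

lemma norm_one_sub_smul_add_smul_sub_sq {E : Type*} [NormedAddCommGroup E]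
    [InnerProductSpace ℝ E] (a b x : E) (t : ℝ) :
    ‖((1 - t) • a + t • b) - x‖ ^ 2
      = (1 - t) * ‖a - x‖ ^ 2 + t * ‖b - x‖ ^ 2 - t * (1 - t) * ‖a - b‖ ^ 2 := by
  rw [show ((1 - t) • a + t • b) - x = (1 - t) • (a - x) + t • (b - x) by module,
    show a - b = (a - x) - (b - x) by abel]
  simp only [← real_inner_self_eq_norm_sq, inner_add_add_self, inner_sub_sub_self,
    real_inner_smul_left, real_inner_smul_right, real_inner_comm (b - x) (a - x)]
  ring

theorem exists_mem_forall_norm_le_of_complete_convex {E : Type*} [NormedAddCommGroup E]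
    [InnerProductSpace ℝ E] {K : Set E} (hne : K.Nonempty) (hK : IsComplete K)
    (hKc : Convex ℝ K) : ∃ p ∈ K, ∀ q ∈ K, ‖p‖ ≤ ‖q‖ := by
  obtain ⟨p, hp, hpK⟩ := exists_norm_eq_iInf_of_complete_convex hne hK hKc 0
  refine ⟨p, hp, fun q hq => ?_⟩
  have hbdd : BddBelow (range fun w : K => ‖(0 : E) - w‖) :=
    ⟨0, forall_mem_range.2 fun _ => norm_nonneg _⟩
  have h := ciInf_le hbdd ⟨q, hq⟩
  rw [← hpK] at h
  simpa using h

section Separation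

variable {E : Type*} [NormedAddCommGroup E] [NormedSpace ℝ E] {C : Set (E × ℝ)} {x : E} {s : ℝ}

theorem exists_nonvertical_separation_of_neg_mul_norm_le (hC : Convex ℝ C) (hx : (x, 0) ∈ C)
    (hs : 0 ≤ s) (hbound : ∀ z ∈ C, -(s * ‖z.1 - x‖) ≤ z.2) :
    ∃ M : StrongDual ℝ E, ∃ β > 0,
      (∀ z ∈ C, M x ≤ M z.1 + z.2 * β) ∧ ∀ y, M y - s * ‖y - x‖ * β ≤ M x := by
  set O : Set (E × ℝ) := {z | z.1 ∈ univ ∧ z.2 < -(s * dist z.1 x)}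
  have hO : IsOpen O := by
    simp only [O, mem_univ, true_and]
    exact isOpen_lt continuous_snd (by fun_prop)
  have hOC : Disjoint O C := by
    refine Set.disjoint_left.2 fun z hzO hzC => ?_
    have := hzO.2
    rw [dist_eq_norm] at this
    linarith [hbound z hzC]
  obtain ⟨ℓ, c, hℓO, hℓC⟩ := geometric_hahn_banach_open
    ((convexOn_dist x convex_univ).smul hs).neg.convex_strict_hypograph hO hC hOC
  set β := ℓ (0, 1)
  set M := ℓ.comp (ContinuousLinearMap.inl ℝ E ℝ)
  have hℓ : ∀ y t, ℓ (y, t) = M y + t * β := fun y t => by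
    rw [show ((y, t) : E × ℝ) = (y, 0) + t • (0, 1) by simp, map_add, map_smul, smul_eq_mul]
    rfl
  have hcx : c ≤ M x := by simpa [hℓ] using hℓC _ hx
  have hmemO : ∀ y t, t < -(s * ‖y - x‖) → M y + t * β < c := fun y t ht => by
    rw [← hℓ]
    exact hℓO _ ⟨mem_univ _, show t < -(s * dist y x) by rwa [dist_eq_norm]⟩
  have hβ : 0 < β := by linarith [hmemO x (-1) (by simp)]
  have hO_le : ∀ y, M y - s * ‖y - x‖ * β ≤ c := fun y => by
    refine le_of_forall_pos_lt_add fun ε hε => ?_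
    have := hmemO y (-(s * ‖y - x‖) - ε / β) (by linarith [div_pos hε hβ])
    rw [sub_mul, div_mul_cancel₀ _ hβ.ne'] at this
    linarith
  have hxc : M x ≤ c := by simpa using hO_le x
  refine ⟨M, β, hβ, fun z hz => ?_, fun y => (hO_le y).trans hcx⟩
  simpa [hℓ] using hxc.trans (hℓC z hz)

theorem exists_dual_le_of_neg_mul_norm_le (hC : Convex ℝ C) (hx : (x, 0) ∈ C) (hs : 0 ≤ s)
    (hbound : ∀ z ∈ C, -(s * ‖z.1 - x‖) ≤ z.2) :
    ∃ L : StrongDual ℝ E, (∀ z ∈ C, L (z.1 - x) ≤ z.2) ∧ ‖L‖ ≤ s := by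
  obtain ⟨M, β, hβ, hMC, hMs⟩ := exists_nonvertical_separation_of_neg_mul_norm_le hC hx hs hbound
  have hL : ∀ v, (-β⁻¹ • M) v = -(β⁻¹ * M v) := fun v => by
    simp only [FunLike.coe_smul, Pi.smul_apply, smul_eq_mul, neg_mul]
  refine ⟨-β⁻¹ • M, fun z hz => ?_, ContinuousLinearMap.opNorm_le_bound _ hs fun v => ?_⟩
  · rw [hL, map_sub, neg_le, le_inv_mul_iff₀ hβ]
    linarith [hMC z hz]
  · have h₁ := hMs (x + v)
    have h₂ := hMs (x - v)
    simp only [map_add, map_sub, add_sub_cancel_left, sub_sub_cancel_left, norm_neg] at h₁ h₂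
    rw [hL, norm_neg, norm_mul, norm_inv, Real.norm_of_nonneg hβ.le, Real.norm_eq_abs,
      inv_mul_le_iff₀ hβ, abs_le]
    constructor <;> nlinarith

end Separation

section Slope

variable {E : Type*} [NormedAddCommGroup E] {lam : ℝ} {f : E → EReal} {x : E}

lemma slope_quotient_le_iff (hbot : ∀ y, f y ≠ ⊥) (hx : f x ≠ ⊤) {y : E} (hyx : y ≠ x) {s : ℝ}
    (hs : 0 ≤ s) :
    (max (f x - f y + ((lam / 2 * ‖x - y‖ ^ 2 : ℝ) : EReal)) 0).toReal / ‖x - y‖ ≤ s ↔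
      (f y ≠ ⊤ → (f x).toReal + lam / 2 * ‖y - x‖ ^ 2 - s * ‖y - x‖ ≤ (f y).toReal) := by
  have hd : 0 < ‖x - y‖ := norm_pos_iff.2 (sub_ne_zero.2 hyx.symm)
  rw [div_le_iff₀ hd, norm_sub_rev y x, ← EReal.coe_toReal hx (hbot x)]
  by_cases hy : f y = ⊤
  · simp [hy, mul_nonneg hs hd.le]
  rw [← EReal.coe_toReal hy (hbot y), ← EReal.coe_sub, ← EReal.coe_add, ← EReal.coe_zero,
    ← EReal.coe_strictMono.monotone.map_max, EReal.toReal_coe, max_le_iff]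
  simp only [mul_nonneg hs hd.le, and_true, ne_eq, EReal.coe_ne_top, not_false_eq_true,
    EReal.toReal_coe, forall_const]
  constructor <;> intro h <;> linarith

/-- The quantity `S(x)` of the statement. -/
def globalSlope (lam : ℝ) (f : E → EReal) (x : E) : ℝ≥0∞ :=
  ⨆ (y : E) (_ : y ≠ x), ENNReal.ofReal
    ((max (f x - f y + ((lam / 2 * ‖x - y‖ ^ 2 : ℝ) : EReal)) 0).toReal / ‖x - y‖)

lemma globalSlope_le_ofReal_iff (hbot : ∀ y, f y ≠ ⊥) (hx : f x ≠ ⊤) {s : ℝ} (hs : 0 ≤ s) :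
    globalSlope lam f x ≤ ENNReal.ofReal s ↔
      ∀ y, f y ≠ ⊤ → (f x).toReal + lam / 2 * ‖y - x‖ ^ 2 - s * ‖y - x‖ ≤ (f y).toReal := by
  simp only [globalSlope, iSup₂_le_iff, ENNReal.ofReal_le_ofReal_iff hs]
  refine forall_congr' fun y => ?_
  rcases eq_or_ne y x with rfl | hyx
  · simp
  · simp only [ne_eq, hyx, not_false_eq_true, forall_const, slope_quotient_le_iff hbot hx hyx hs]

variable [InnerProductSpace ℝ E]

lemma LambdaConvex.toReal_le (hconv : LambdaConvex lam f) (hbot : ∀ y, f y ≠ ⊥) {a b : E}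
    (ha : f a ≠ ⊤) (hb : f b ≠ ⊤) {t : ℝ} (ht₀ : 0 ≤ t) (ht₁ : t ≤ 1) :
    f ((1 - t) • a + t • b) ≠ ⊤ ∧ (f ((1 - t) • a + t • b)).toReal
      ≤ (1 - t) * (f a).toReal + t * (f b).toReal - lam / 2 * (t * (1 - t)) * ‖a - b‖ ^ 2 := by
  have h := hconv a b t ht₀ ht₁
  rw [← EReal.coe_toReal ha (hbot a), ← EReal.coe_toReal hb (hbot b), ← EReal.coe_mul,
    ← EReal.coe_mul, ← EReal.coe_add, ← EReal.coe_sub] at h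
  exact ⟨ne_top_of_le_ne_top (EReal.coe_ne_top _) h,
    by simpa only [EReal.toReal_coe] using EReal.toReal_le_toReal h (hbot _) (EReal.coe_ne_top _)⟩

lemma LambdaConvex.convex_epigraph_sub_sq (hconv : LambdaConvex lam f) (hbot : ∀ y, f y ≠ ⊥)
    (r : ℝ) (c : E) :
    Convex ℝ {z : E × ℝ | f z.1 ≠ ⊤ ∧ (f z.1).toReal ≤ r + lam / 2 * ‖z.1 - c‖ ^ 2 + z.2} := by
  rintro ⟨a, α⟩ ⟨ha, haα⟩ ⟨b, β⟩ ⟨hb, hbβ⟩ u t hu ht hut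
  obtain rfl := eq_sub_of_add_eq hut
  obtain ⟨hne, hle⟩ := hconv.toReal_le hbot ha hb ht (by linarith)
  refine ⟨hne, hle.trans ?_⟩
  simp only [Prod.smul_mk, Prod.mk_add_mk, smul_eq_mul]
  rw [norm_one_sub_smul_add_smul_sub_sq]
  nlinarith [mul_le_mul_of_nonneg_left haα hu, mul_le_mul_of_nonneg_left hbβ ht]

lemma mem_subdiff_iff (hbot : ∀ y, f y ≠ ⊥) (hx : f x ≠ ⊤) {p : E} :
    p ∈ subdiff lam f x ↔
      ∀ y, f y ≠ ⊤ → ⟪p, y - x⟫ ≤ (f y).toReal - (f x).toReal - lam / 2 * ‖y - x‖ ^ 2 := by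
  simp only [subdiff, mem_ofPred_eq, hx, ne_eq, not_false_eq_true, true_and]
  refine forall_congr' fun y => ?_
  rw [← EReal.coe_toReal hx (hbot x), ← EReal.coe_add, EReal.coe_le_iff_of_ne_bot (hbot y),
    EReal.toReal_coe]
  exact imp_congr_right fun _ => by constructor <;> intro h <;> linarith

lemma subdiff_eq_biInter (hbot : ∀ y, f y ≠ ⊥) (hx : f x ≠ ⊤) :
    subdiff lam f x = ⋂ y ∈ {y | f y ≠ ⊤},
      {p | ⟪p, y - x⟫ ≤ (f y).toReal - (f x).toReal - lam / 2 * ‖y - x‖ ^ 2} := by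
  ext p
  simp only [mem_subdiff_iff hbot hx, mem_iInter, mem_ofPred_eq]

lemma isClosed_subdiff (hbot : ∀ y, f y ≠ ⊥) (hx : f x ≠ ⊤) : IsClosed (subdiff lam f x) := by
  rw [subdiff_eq_biInter hbot hx]
  exact isClosed_biInter fun y _ => isClosed_le (by fun_prop) continuous_const

lemma convex_subdiff (hbot : ∀ y, f y ≠ ⊥) (hx : f x ≠ ⊤) : Convex ℝ (subdiff lam f x) := by
  rw [subdiff_eq_biInter hbot hx]
  exact convex_iInter₂ fun y _ => convex_halfSpace_le
    ⟨fun p q => inner_add_left p q _, fun c p => real_inner_smul_left p _ c⟩ _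

lemma globalSlope_le_norm_of_mem_subdiff (hbot : ∀ y, f y ≠ ⊥) {p : E}
    (hp : p ∈ subdiff lam f x) : globalSlope lam f x ≤ ENNReal.ofReal ‖p‖ := by
  have hx : f x ≠ ⊤ := hp.1
  refine (globalSlope_le_ofReal_iff hbot hx (norm_nonneg p)).2 fun y hy => ?_
  have hsub := (mem_subdiff_iff hbot hx).1 hp y hy
  have hcs := (abs_le.1 (abs_real_inner_le_norm p (y - x))).1
  linarith

end Slope

section Hilbert

variable {lam : ℝ} {f : H → EReal} {x : H}

lemma exists_mem_subdiff_forall_norm_le (hbot : ∀ y, f y ≠ ⊥)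
    (hne : (subdiff lam f x).Nonempty) :
    ∃ p ∈ subdiff lam f x, ∀ q ∈ subdiff lam f x, ‖p‖ ≤ ‖q‖ := by
  have hx : f x ≠ ⊤ := hne.some_mem.1
  exact exists_mem_forall_norm_le_of_complete_convex hne
    (isClosed_subdiff hbot hx).isComplete (convex_subdiff hbot hx)

lemma gradMin_spec (hbot : ∀ y, f y ≠ ⊥) (hne : (subdiff lam f x).Nonempty) :
    gradMin lam f x ∈ subdiff lam f x ∧ ∀ q ∈ subdiff lam f x, ‖gradMin lam f x‖ ≤ ‖q‖ := by
  have h := exists_mem_subdiff_forall_norm_le hbot hne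
  rw [gradMin, dif_pos h]
  exact h.choose_spec

lemma exists_mem_subdiff_norm_le_of_globalSlope_le (hconv : LambdaConvex lam f)
    (hbot : ∀ y, f y ≠ ⊥) (hx : f x ≠ ⊤) {s : ℝ} (hs : 0 ≤ s)
    (hslope : globalSlope lam f x ≤ ENNReal.ofReal s) :
    ∃ p ∈ subdiff lam f x, ‖p‖ ≤ s := by
  have hbound := (globalSlope_le_ofReal_iff hbot hx hs).1 hslope
  obtain ⟨L, hL, hLs⟩ := exists_dual_le_of_neg_mul_norm_le
    (hconv.convex_epigraph_sub_sq hbot (f x).toReal x) (x := x) ⟨hx, by simp⟩ hs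
    fun z hz => by linarith [hbound z.1 hz.1, hz.2]
  refine ⟨(InnerProductSpace.toDual ℝ H).symm L, (mem_subdiff_iff hbot hx).2 fun y hy => ?_,
    by simpa using hLs⟩
  rw [InnerProductSpace.toDual_symm_apply]
  simpa using hL (y, (f y).toReal - (f x).toReal - lam / 2 * ‖y - x‖ ^ 2) ⟨hy, by simp⟩

end Hilbert

theorem statement11_general (lam : ℝ) (f : H → EReal)
    (hf : ProperFn f) (hconv : LambdaConvex lam f)
    (x : H) (hx : f x ≠ ⊤) :
    ((subdiff lam f x).Nonempty ↔
      (⨆ (y : H) (_ : y ≠ x), ENNReal.ofReal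
        ((max (f x - f y + ((lam / 2 * ‖x - y‖ ^ 2 : ℝ) : EReal)) 0).toReal / ‖x - y‖)) ≠ ⊤) ∧
    ((subdiff lam f x).Nonempty →
      ENNReal.ofReal ‖gradMin lam f x‖ =
        ⨆ (y : H) (_ : y ≠ x), ENNReal.ofReal
          ((max (f x - f y + ((lam / 2 * ‖x - y‖ ^ 2 : ℝ) : EReal)) 0).toReal / ‖x - y‖)) := by
  change (_ ↔ globalSlope lam f x ≠ ⊤) ∧ (_ → _ = globalSlope lam f x)
  have hbot := hf.2
  have hfinite_of_mem : ∀ {p}, p ∈ subdiff lam f x → globalSlope lam f x ≠ ⊤ := fun hp =>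
    ne_top_of_le_ne_top ENNReal.ofReal_ne_top (globalSlope_le_norm_of_mem_subdiff hbot hp)
  have hmem_of_finite : globalSlope lam f x ≠ ⊤ →
      ∃ p ∈ subdiff lam f x, ‖p‖ ≤ (globalSlope lam f x).toReal := fun h =>
    exists_mem_subdiff_norm_le_of_globalSlope_le hconv hbot hx ENNReal.toReal_nonneg
      (ENNReal.ofReal_toReal h).ge
  refine ⟨⟨fun ⟨_, hp⟩ => hfinite_of_mem hp, fun h => ?_⟩, fun hne => ?_⟩
  · obtain ⟨p, hp, -⟩ := hmem_of_finite h
    exact ⟨p, hp⟩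
  · obtain ⟨hmin_mem, hmin⟩ := gradMin_spec hbot hne
    obtain ⟨p, hp, hps⟩ := hmem_of_finite (hfinite_of_mem hmin_mem)
    refine le_antisymm ?_ (globalSlope_le_norm_of_mem_subdiff hbot hmin_mem)
    rw [← ENNReal.ofReal_toReal (hfinite_of_mem hmin_mem)]
    exact ENNReal.ofReal_le_ofReal ((hmin p hp).trans hps)

/-- variational characterization of `|∇f|`. -/
theorem statement11 (lam : ℝ) (f : H → EReal)
    (hf : ProperFn f) (hconv : LambdaConvex lam f) (hlsc : LowerSemicontinuous f)
    (x : H) (hx : f x ≠ ⊤) :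
    ((subdiff lam f x).Nonempty ↔
      (⨆ (y : H) (_ : y ≠ x), ENNReal.ofReal
        ((max (f x - f y + ((lam / 2 * ‖x - y‖ ^ 2 : ℝ) : EReal)) 0).toReal / ‖x - y‖)) ≠ ⊤) ∧
    ((subdiff lam f x).Nonempty →
      ENNReal.ofReal ‖gradMin lam f x‖ =
        ⨆ (y : H) (_ : y ≠ x), ENNReal.ofReal
          ((max (f x - f y + ((lam / 2 * ‖x - y‖ ^ 2 : ℝ) : EReal)) 0).toReal / ‖x - y‖)) :=
  statement11_general lam f hf hconv x hx

end
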